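/- arXiv:1810.07351 — 5 statements merged into one kernel-verified Lean document; each statement's English description precedes it below -/
import Mathlib

section
/- Let ψ be a unit vector in a complex Hilbert space, let k ≥ 1, and let A₁, …, A_k be bounded operators with ‖A_i‖ ≤ M and Var_ψ(A_i) ≤ ε² for every i, where M, ε ≥ 0. Then |⟨ψ, A₁ A₂ ⋯ A_k ψ⟩ − ∏_{i=1}^k ⟨ψ, A_i ψ⟩| ≤ (k−1) M^{k−1} ε. -/
/-! Write `A ψ = ⟪ψ, A ψ⟫ ψ + r` with `‖r‖ ≤ ε`. Peeling the last factor off the product,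
`⟪ψ, B (A ψ)⟫ = ⟪ψ, A ψ⟫ ⟪ψ, B ψ⟫ + ⟪ψ, B r⟫`, so each factor costs an error of at most
`‖B‖ ε ≤ M ^ (k - 1) ε` while multiplying the previous error by `|⟪ψ, A ψ⟫| ≤ M`. -/

/-- Variance of a bounded operator in a state: `Var ψ A = ‖(A - ⟨ψ, Aψ⟩)ψ‖ ^ 2`. -/
noncomputable def Var {H : Type*} [NormedAddCommGroup H] [InnerProductSpace ℂ H]
    (ψ : H) (A : H →L[ℂ] H) : ℝ :=
  ‖A ψ - (inner ℂ ψ (A ψ) : ℂ) • ψ‖ ^ 2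

section

variable {H : Type*} [NormedAddCommGroup H] [InnerProductSpace ℂ H]

lemma norm_apply_sub_inner_smul_le_of_var_le {ψ : H} {A : H →L[ℂ] H} {ε : ℝ} (hε : 0 ≤ ε)
    (h : Var ψ A ≤ ε ^ 2) : ‖A ψ - inner ℂ ψ (A ψ) • ψ‖ ≤ ε :=
  (sq_le_sq₀ (norm_nonneg _) hε).1 h

lemma norm_inner_apply_le_opNorm {ψ : H} (hψ : ‖ψ‖ = 1) (A : H →L[ℂ] H) :
    ‖inner ℂ ψ (A ψ)‖ ≤ ‖A‖ :=
  calc ‖inner ℂ ψ (A ψ)‖ ≤ ‖ψ‖ * ‖A ψ‖ := norm_inner_le_norm _ _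
    _ ≤ ‖ψ‖ * (‖A‖ * ‖ψ‖) := by gcongr; exact A.le_opNorm ψ
    _ = ‖A‖ := by rw [hψ]; ring

lemma norm_inner_comp_sub_mul_le (ψ : H) (A B : H →L[ℂ] H) :
    ‖inner ℂ ψ (B (A ψ)) - inner ℂ ψ (B ψ) * inner ℂ ψ (A ψ)‖
      ≤ ‖ψ‖ * (‖B‖ * ‖A ψ - inner ℂ ψ (A ψ) • ψ‖) := by
  have hsplit : inner ℂ ψ (B (A ψ)) - inner ℂ ψ (B ψ) * inner ℂ ψ (A ψ)
      = inner ℂ ψ (B (A ψ - inner ℂ ψ (A ψ) • ψ)) := by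
    rw [map_sub, map_smul, inner_sub_right, inner_smul_right, mul_comm]
  rw [hsplit]
  exact (norm_inner_le_norm _ _).trans (by gcongr; exact B.le_opNorm _)

lemma norm_ofFn_prod_le_pow {n : ℕ} (A : Fin n → H →L[ℂ] H) {M : ℝ} (h : ∀ i, ‖A i‖ ≤ M) :
    ‖(List.ofFn A).prod‖ ≤ M ^ n := by
  induction n with
  | zero => simpa [ContinuousLinearMap.one_def] using ContinuousLinearMap.norm_id_le
  | succ n ih =>
    rw [List.ofFn_succ, List.prod_cons, pow_succ']
    exact (norm_mul_le _ _).trans <| mul_le_mul (h 0) (ih _ fun i => h i.succ)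
      (norm_nonneg _) ((norm_nonneg _).trans (h 0))

lemma norm_inner_ofFn_prod_sub_prod_le {ψ : H} (hψ : ‖ψ‖ = 1) {n : ℕ}
    (A : Fin (n + 1) → H →L[ℂ] H) {M ε : ℝ} (hM : 0 ≤ M) (hε : 0 ≤ ε)
    (hnorm : ∀ i, ‖A i‖ ≤ M) (hvar : ∀ i, Var ψ (A i) ≤ ε ^ 2) :
    ‖inner ℂ ψ ((List.ofFn A).prod ψ) - ∏ i, inner ℂ ψ (A i ψ)‖ ≤ n * M ^ n * ε := by
  induction n with
  | zero => simp
  | succ n ih =>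
    set a := A (Fin.last (n + 1))
    set B := (List.ofFn fun i : Fin (n + 1) => A i.castSucc).prod
    set μ := inner ℂ ψ (a ψ)
    have hsplit : inner ℂ ψ ((List.ofFn A).prod ψ) - ∏ i, inner ℂ ψ (A i ψ)
        = (inner ℂ ψ (B (a ψ)) - inner ℂ ψ (B ψ) * μ)
          + (inner ℂ ψ (B ψ) - ∏ i : Fin (n + 1), inner ℂ ψ (A i.castSucc ψ)) * μ := by
      rw [List.ofFn_succ', List.concat_eq_append, List.prod_append, List.prod_singleton,
        Fin.prod_univ_castSucc, mul_apply_eq_comp]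
      ring
    have hstep : ‖inner ℂ ψ (B (a ψ)) - inner ℂ ψ (B ψ) * μ‖ ≤ M ^ (n + 1) * ε := by
      refine (norm_inner_comp_sub_mul_le ψ a B).trans ?_
      rw [hψ, one_mul]
      exact mul_le_mul (norm_ofFn_prod_le_pow _ fun i => hnorm _)
        (norm_apply_sub_inner_smul_le_of_var_le hε (hvar _)) (norm_nonneg _) (by positivity)
    have hprev := ih (fun i => A i.castSucc) (fun i => hnorm _) (fun i => hvar _)
    have hμ : ‖μ‖ ≤ M := (norm_inner_apply_le_opNorm hψ a).trans (hnorm _)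
    calc _ ≤ M ^ (n + 1) * ε + n * M ^ n * ε * M := by
          rw [hsplit]
          refine (norm_add_le _ _).trans (add_le_add hstep ?_)
          rw [norm_mul]
          exact mul_le_mul hprev hμ (norm_nonneg _) (by positivity)
      _ = (n + 1 : ℕ) * M ^ (n + 1) * ε := by push_cast; ring

end

theorem expectation_of_product_general {H : Type*} [NormedAddCommGroup H] [InnerProductSpace ℂ H]
    (ψ : H) (hψ : ‖ψ‖ = 1) (k : ℕ) (hk : 1 ≤ k)
    (A : Fin k → H →L[ℂ] H) (M ε : ℝ) (hM : 0 ≤ M) (hε : 0 ≤ ε)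
    (hnorm : ∀ i, ‖A i‖ ≤ M) (hvar : ∀ i, Var ψ (A i) ≤ ε ^ 2) :
    ‖(inner ℂ ψ ((List.ofFn A).prod ψ) : ℂ) - ∏ i, (inner ℂ ψ (A i ψ) : ℂ)‖
      ≤ ((k : ℝ) - 1) * M ^ (k - 1) * ε := by
  obtain ⟨n, rfl⟩ : ∃ n, k = n + 1 := ⟨k - 1, by omega⟩
  simpa using norm_inner_ofFn_prod_sub_prod_le hψ A hM hε hnorm hvar

/-- Expectation of a product of approximate eigen-operators: if each `A i` has norm at most `M`
and variance at most `ε ^ 2` in the unit state `ψ`, then the expectation of the (ordered)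
product `A 0 * A 1 * ⋯ * A (k-1)` differs from the product of the expectations by at most
`(k - 1) * M ^ (k - 1) * ε`. -/
theorem expectation_of_product {H : Type*} [NormedAddCommGroup H] [InnerProductSpace ℂ H]
    [CompleteSpace H] (ψ : H) (hψ : ‖ψ‖ = 1) (k : ℕ) (hk : 1 ≤ k)
    (A : Fin k → H →L[ℂ] H) (M ε : ℝ) (hM : 0 ≤ M) (hε : 0 ≤ ε)
    (hnorm : ∀ i, ‖A i‖ ≤ M) (hvar : ∀ i, Var ψ (A i) ≤ ε ^ 2) :
    ‖(inner ℂ ψ ((List.ofFn A).prod ψ) : ℂ) - ∏ i, (inner ℂ ψ (A i ψ) : ℂ)‖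
      ≤ ((k : ℝ) - 1) * M ^ (k - 1) * ε :=
  expectation_of_product_general ψ hψ k hk A M ε hM hε hnorm hvar
end

section
/- Let W₁ and W₂ be unitary operators on a complex Hilbert space, set W = W₁W₂, and let ψ be a unit vector. If δ ≥ |⟨ψ, W₁W₂ψ⟩ − ⟨ψ, W₁ψ⟩⟨ψ, W₂ψ⟩|, then Var_ψ(W₁) ≤ Var_ψ(W) + 2δ. -/
section Variance

variable {H : Type*} [NormedAddCommGroup H] [InnerProductSpace ℂ H]

theorem var_eq_norm_sq_sub_norm_inner_sq {ψ : H} (hψ : ‖ψ‖ = 1) (A : H →L[ℂ] H) :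
    Var ψ A = ‖A ψ‖ ^ 2 - ‖(inner ℂ ψ (A ψ) : ℂ)‖ ^ 2 := by
  set c : ℂ := inner ℂ ψ (A ψ)
  have h_orth : inner ℂ (A ψ - c • ψ) (c • ψ) = (0 : ℂ) := by
    rw [inner_smul_right, inner_sub_left, inner_smul_left, inner_self_eq_norm_sq_to_K, hψ,
      ← inner_conj_symm]
    simp [c]
  have h_pyth := norm_add_sq_eq_norm_sq_add_norm_sq_of_inner_eq_zero _ _ h_orth
  rw [sub_add_cancel, norm_smul, hψ, mul_one] at h_pyth
  change ‖A ψ - c • ψ‖ ^ 2 = ‖A ψ‖ ^ 2 - ‖c‖ ^ 2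
  rw [sq, sq, sq, h_pyth, add_sub_cancel_right]

variable [CompleteSpace H] {U : H →L[ℂ] H} (hU : U ∈ unitary (H →L[ℂ] H)) {ψ : H} (hψ : ‖ψ‖ = 1)
include hU hψ

theorem var_eq_one_sub_norm_inner_sq_of_mem_unitary :
    Var ψ U = 1 - ‖(inner ℂ ψ (U ψ) : ℂ)‖ ^ 2 := by
  rw [var_eq_norm_sq_sub_norm_inner_sq hψ, U.norm_map_of_mem_unitary hU, hψ, one_pow]

theorem norm_inner_apply_le_one_of_mem_unitary : ‖(inner ℂ ψ (U ψ) : ℂ)‖ ≤ 1 :=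
  calc ‖(inner ℂ ψ (U ψ) : ℂ)‖ ≤ ‖ψ‖ * ‖U ψ‖ := norm_inner_le_norm _ _
    _ = 1 := by rw [U.norm_map_of_mem_unitary hU, hψ, one_mul]

end Variance

theorem sq_sub_sq_le_two_mul_of_le_add {a c δ : ℝ} (hc : 0 ≤ c) (hc₁ : c ≤ 1) (hδ : 0 ≤ δ)
    (hca : c ≤ a + δ) : c ^ 2 - a ^ 2 ≤ 2 * δ :=
  calc c ^ 2 - a ^ 2 ≤ 2 * c * (c - a) := by nlinarith [sq_nonneg (c - a)]
    _ ≤ 2 * c * δ := by nlinarith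
    _ ≤ 2 * δ := by nlinarith

/-- If the expectation of a product of two unitaries in a unit state `ψ` approximately
factorizes with error `δ`, then `Var ψ W₁ ≤ Var ψ (W₁ * W₂) + 2δ`. -/
theorem variance_of_factor {H : Type*} [NormedAddCommGroup H] [InnerProductSpace ℂ H]
    [CompleteSpace H] (W₁ W₂ : H →L[ℂ] H)
    (hW₁ : W₁ ∈ unitary (H →L[ℂ] H)) (hW₂ : W₂ ∈ unitary (H →L[ℂ] H))
    (ψ : H) (hψ : ‖ψ‖ = 1) (δ : ℝ)
    (hδ : ‖(inner ℂ ψ ((W₁ * W₂) ψ) : ℂ)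
        - (inner ℂ ψ (W₁ ψ) : ℂ) * (inner ℂ ψ (W₂ ψ) : ℂ)‖ ≤ δ) :
    Var ψ W₁ ≤ Var ψ (W₁ * W₂) + 2 * δ := by
  have hW := mul_mem hW₁ hW₂
  set a : ℂ := inner ℂ ψ (W₁ ψ)
  set b : ℂ := inner ℂ ψ (W₂ ψ)
  set c : ℂ := inner ℂ ψ ((W₁ * W₂) ψ)
  have hb₁ : ‖b‖ ≤ 1 := norm_inner_apply_le_one_of_mem_unitary hW₂ hψ
  have hc₁ : ‖c‖ ≤ 1 := norm_inner_apply_le_one_of_mem_unitary hW hψ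
  have hca : ‖c‖ ≤ ‖a‖ + δ :=
    calc ‖c‖ ≤ ‖c - a * b‖ + ‖a * b‖ := norm_le_norm_sub_add c (a * b)
      _ ≤ δ + ‖a‖ * 1 := by rw [norm_mul]; gcongr
      _ = ‖a‖ + δ := by ring
  rw [var_eq_one_sub_norm_inner_sq_of_mem_unitary hW₁ hψ,
    var_eq_one_sub_norm_inner_sq_of_mem_unitary hW hψ]
  linarith [sq_sub_sq_le_two_mul_of_le_add (norm_nonneg c) hc₁ ((norm_nonneg _).trans hδ) hca]
end

section
/- Let A be a bounded self-adjoint operator on a complex Hilbert space, ψ a unit vector, and f : ℝ → ℝ a differentiable function with |f′(x)| ≤ K for all x ∈ ℝ. Then Var_ψ(f(A)) ≤ K² Var_ψ(A), where f(A) denotes the continuous functional calculus of f applied to A. -/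
/-!
For self-adjoint `A` the expectation `μ = ⟪ψ, Aψ⟫` is real, and `Var ψ B` is the minimum of
`‖Bψ - cψ‖²` over `c : ℂ`. Taking `c = f μ` bounds `Var ψ (f A)` by `‖g(A)ψ‖²` with
`g x = f x - f μ`. By the mean value theorem `|g x| ≤ K |x - μ|`, and since
`‖h(A)ψ‖² = ⟪ψ, h²(A)ψ⟫` and the functional calculus is monotone, `‖g(A)ψ‖ ≤ K ‖(A - μ)ψ‖`.
-/

open RCLike

/-- By Pythagoras, `‖Bψ - cψ‖² = Var ψ B + ‖(⟪ψ, Bψ⟫ - c) ψ‖²`. -/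
lemma Var_le_norm_sub_smul_sq {H : Type*} [NormedAddCommGroup H] [InnerProductSpace ℂ H]
    {ψ : H} (hψ : ‖ψ‖ = 1) (B : H →L[ℂ] H) (c : ℂ) :
    Var ψ B ≤ ‖B ψ - c • ψ‖ ^ 2 := by
  set m : ℂ := inner ℂ ψ (B ψ)
  have hψψ : inner ℂ ψ ψ = (1 : ℂ) := by simp [inner_self_eq_norm_sq_to_K, hψ]
  have horth : inner ℂ (B ψ - m • ψ) ((m - c) • ψ) = 0 := by
    rw [inner_smul_right, inner_sub_left, inner_smul_left, hψψ, inner_conj_symm]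
    simp [m]
  have hsplit : B ψ - c • ψ = (B ψ - m • ψ) + (m - c) • ψ := by
    rw [sub_smul]; abel
  rw [hsplit, norm_add_sq (𝕜 := ℂ), horth, map_zero, mul_zero, add_zero]
  exact le_add_of_nonneg_right (sq_nonneg _)

lemma ContinuousLinearMap.norm_apply_le_of_star_mul_self_le {𝕜 E : Type*} [RCLike 𝕜]
    [NormedAddCommGroup E] [InnerProductSpace 𝕜 E] [CompleteSpace E] {S T : E →L[𝕜] E}
    (h : star S * S ≤ star T * T) (x : E) : ‖S x‖ ≤ ‖T x‖ := by
  have hpos := (le_def _ _).mp h |>.re_inner_nonneg_left x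
  rw [sub_apply, inner_sub_left, map_sub, sub_nonneg] at hpos
  rw [← sq_le_sq₀ (norm_nonneg _) (norm_nonneg _), apply_norm_sq_eq_inner_adjoint_left,
    apply_norm_sq_eq_inner_adjoint_left]
  exact hpos

section FunctionalCalculus

variable {H : Type*} [NormedAddCommGroup H] [InnerProductSpace ℂ H] [CompleteSpace H]

lemma cfc_sub_const_apply {A : H →L[ℂ] H} (hA : IsSelfAdjoint A) {g : ℝ → ℝ}
    (hg : ContinuousOn g (spectrum ℝ A)) (r : ℝ) (ψ : H) :
    cfc (fun x ↦ g x - r) A ψ = cfc g A ψ - (r : ℂ) • ψ := by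
  rw [cfc_sub g (fun _ ↦ r) A, cfc_const r A, sub_apply,
    Algebra.algebraMap_eq_smul_one, smul_apply,
    one_apply_eq_self, Complex.coe_smul]

lemma norm_cfc_apply_le_of_abs_le {A : H →L[ℂ] H} {g h : ℝ → ℝ}
    (hg : ContinuousOn g (spectrum ℝ A)) (hh : ContinuousOn h (spectrum ℝ A))
    (hgh : ∀ x ∈ spectrum ℝ A, |g x| ≤ |h x|) (ψ : H) :
    ‖cfc g A ψ‖ ≤ ‖cfc h A ψ‖ := by
  refine ContinuousLinearMap.norm_apply_le_of_star_mul_self_le ?_ ψ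
  rw [(cfc_predicate g A).star_eq, (cfc_predicate h A).star_eq, ← cfc_mul g g A, ← cfc_mul h h A]
  refine cfc_mono (fun x hx ↦ ?_) (hg.mul hg) (hh.mul hh)
  simpa only [abs_mul_abs_self] using mul_self_le_mul_self (abs_nonneg _) (hgh x hx)

end FunctionalCalculus

lemma abs_sub_le_of_abs_deriv_le {f : ℝ → ℝ} (hf : Differentiable ℝ f) {K : ℝ}
    (hK : ∀ x, |deriv f x| ≤ K) (x y : ℝ) : |f x - f y| ≤ K * |x - y| :=
  convex_univ.norm_image_sub_le_of_norm_deriv_le (fun z _ ↦ hf z) (fun z _ ↦ hK z)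
    (Set.mem_univ y) (Set.mem_univ x)

/-- If `A` is bounded self-adjoint, `ψ` is a unit vector and `f : ℝ → ℝ` is differentiable with
`|f'| ≤ K` everywhere, then `Var ψ (f A) ≤ K ^ 2 * Var ψ A`, where `f A = cfc f A` is the
continuous functional calculus of `f` applied to `A`. -/
theorem variance_of_functional_calculus {H : Type*} [NormedAddCommGroup H]
    [InnerProductSpace ℂ H] [CompleteSpace H]
    (A : H →L[ℂ] H) (hA : IsSelfAdjoint A) (ψ : H) (hψ : ‖ψ‖ = 1)
    (f : ℝ → ℝ) (hf : Differentiable ℝ f) (K : ℝ) (hK : ∀ x : ℝ, |deriv f x| ≤ K) :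
    Var ψ (cfc f A) ≤ K ^ 2 * Var ψ A := by
  set μ : ℝ := re (inner ℂ ψ (A ψ))
  have hμ : inner ℂ ψ (A ψ) = (μ : ℂ) := (hA.isSymmetric.coe_re_inner_self_apply ψ).symm
  have hfc := hf.continuous
  have hLip : ∀ x, |f x - f μ| ≤ |K * (x - μ)| := fun x ↦
    (abs_sub_le_of_abs_deriv_le hf hK x μ).trans (by rw [abs_mul]; gcongr; exact le_abs_self K)
  calc Var ψ (cfc f A) ≤ ‖cfc f A ψ - (f μ : ℂ) • ψ‖ ^ 2 := Var_le_norm_sub_smul_sq hψ _ _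
    _ = ‖cfc (fun x ↦ f x - f μ) A ψ‖ ^ 2 := by
      rw [cfc_sub_const_apply hA hfc.continuousOn]
    _ ≤ ‖cfc (fun x ↦ K * (x - μ)) A ψ‖ ^ 2 := by
      gcongr
      exact norm_cfc_apply_le_of_abs_le (by fun_prop) (by fun_prop) (fun x _ ↦ hLip x) ψ
    _ = K ^ 2 * Var ψ A := by
      rw [cfc_const_mul K _ A, smul_apply,
        cfc_sub_const_apply hA (g := fun x ↦ x) (continuousOn_id' _), cfc_id' ℝ A, norm_smul,
        Var, hμ, Real.norm_eq_abs, mul_pow, sq_abs]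
end

section
/- Let A be an n×n Hermitian complex matrix and C an m×m Hermitian complex matrix with n, m ≥ 1. If every eigenvalue of the Kronecker sum A ⊗ I_m + I_n ⊗ C is an integer, then there exists ν ∈ ℝ such that λ + ν is an integer for every eigenvalue λ of A, and μ − ν is an integer for every eigenvalue μ of C. -/
open scoped Kronecker

/-!
If `A v = a v` and `C w = c w`, the product vector `v ⊗ w` is an eigenvector of the Kronecker sum
with eigenvalue `a + c`, so every such sum is an integer. Take `ν` to be an eigenvalue of `C`, real
because `C` is Hermitian. Then `a + ν ∈ ℤ` for every eigenvalue `a` of `A`, and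
`c - ν = (a₀ + c) - (a₀ + ν) ∈ ℤ` for any fixed eigenvalue `a₀` of `A`, which exists since `n ≥ 1`
and `ℂ` is algebraically closed.
-/

namespace Matrix

theorem kronecker_mulVec_mul {R l m p q : Type*} [CommSemiring R] [Fintype m] [Fintype q]
    (A : Matrix l m R) (B : Matrix p q R) (v : m → R) (w : q → R) :
    (A ⊗ₖ B) *ᵥ (fun x => v x.1 * w x.2) = fun x => (A *ᵥ v) x.1 * (B *ᵥ w) x.2 := by
  ext ⟨i, k⟩
  simp only [mulVec, dotProduct, kroneckerMap_apply, Fintype.sum_prod_type, Finset.sum_mul_sum]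
  exact Finset.sum_congr rfl fun _ _ => Finset.sum_congr rfl fun _ _ => mul_mul_mul_comm ..

variable {K ι κ : Type*} [Field K] [Fintype ι] [DecidableEq ι] [Fintype κ] [DecidableEq κ]

theorem mem_spectrum_iff_exists_mulVec_eq_smul {M : Matrix ι ι K} {μ : K} :
    μ ∈ spectrum K M ↔ ∃ v ≠ 0, M *ᵥ v = μ • v := by
  rw [← spectrum_toLin', ← Module.End.hasEigenvalue_iff_mem_spectrum]
  refine ⟨fun h => ?_, fun ⟨v, hv0, hv⟩ => ?_⟩
  · obtain ⟨v, hv, hv0⟩ := h.exists_hasEigenvector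
    exact ⟨v, hv0, Module.End.mem_eigenspace_iff.1 hv⟩
  · exact Module.End.hasEigenvalue_of_hasEigenvector ⟨Module.End.mem_eigenspace_iff.2 hv, hv0⟩

def kroneckerSum (A : Matrix ι ι K) (C : Matrix κ κ K) : Matrix (ι × κ) (ι × κ) K :=
  A ⊗ₖ 1 + 1 ⊗ₖ C

theorem add_mem_spectrum_kroneckerSum {A : Matrix ι ι K} {C : Matrix κ κ K} {a c : K}
    (ha : a ∈ spectrum K A) (hc : c ∈ spectrum K C) : a + c ∈ spectrum K (kroneckerSum A C) := by
  obtain ⟨v, hv0, hv⟩ := mem_spectrum_iff_exists_mulVec_eq_smul.1 ha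
  obtain ⟨w, hw0, hw⟩ := mem_spectrum_iff_exists_mulVec_eq_smul.1 hc
  refine mem_spectrum_iff_exists_mulVec_eq_smul.2 ⟨fun x => v x.1 * w x.2, ?_, ?_⟩
  · obtain ⟨i, hi⟩ := Function.ne_iff.1 hv0
    obtain ⟨k, hk⟩ := Function.ne_iff.1 hw0
    exact Function.ne_iff.2 ⟨(i, k), mul_ne_zero hi hk⟩
  · ext x
    simp only [kroneckerSum, add_mulVec, kronecker_mulVec_mul, one_mulVec, hv, hw,
      Pi.add_apply, Pi.smul_apply, smul_eq_mul]
    ring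

end Matrix

theorem integer_spectrum_kronecker_sum_shift_general (n m : ℕ) (hn : 1 ≤ n) (hm : 1 ≤ m)
    (A : Matrix (Fin n) (Fin n) ℂ) (C : Matrix (Fin m) (Fin m) ℂ)
    (hC : C.IsHermitian)
    (hint : ∀ z ∈ spectrum ℂ (A ⊗ₖ (1 : Matrix (Fin m) (Fin m) ℂ) +
        (1 : Matrix (Fin n) (Fin n) ℂ) ⊗ₖ C), ∃ j : ℤ, z = (j : ℂ)) :
    ∃ ν : ℝ, (∀ lam ∈ spectrum ℂ A, ∃ j : ℤ, lam + (ν : ℂ) = (j : ℂ)) ∧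
      (∀ mu ∈ spectrum ℂ C, ∃ j : ℤ, mu - (ν : ℂ) = (j : ℂ)) := by
  have hsum : ∀ a ∈ spectrum ℂ A, ∀ c ∈ spectrum ℂ C, ∃ j : ℤ, a + c = j := fun a ha c hc =>
    hint _ (Matrix.add_mem_spectrum_kroneckerSum ha hc)
  have : Nonempty (Fin n) := ⟨⟨0, hn⟩⟩
  obtain ⟨a₀, ha₀⟩ := spectrum.nonempty_of_isAlgClosed_of_finiteDimensional ℂ A
  set ν := hC.eigenvalues ⟨0, hm⟩
  have hν : (ν : ℂ) ∈ spectrum ℂ C := hC.spectrum_eq_image_range ▸ ⟨ν, ⟨_, rfl⟩, rfl⟩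
  refine ⟨ν, fun a ha => hsum a ha ν hν, fun c hc => ?_⟩
  obtain ⟨j, hj⟩ := hsum a₀ ha₀ c hc
  obtain ⟨k, hk⟩ := hsum a₀ ha₀ ν hν
  exact ⟨j - k, by push_cast; linear_combination hj - hk⟩

/-- If the Kronecker sum `A ⊗ I + I ⊗ C` of two Hermitian matrices has integer spectrum, then
there is a common real shift `ν` making the spectrum of `A` (shifted by `+ν`) and the spectrum
of `C` (shifted by `-ν`) integer. -/
theorem integer_spectrum_kronecker_sum_shift (n m : ℕ) (hn : 1 ≤ n) (hm : 1 ≤ m)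
    (A : Matrix (Fin n) (Fin n) ℂ) (C : Matrix (Fin m) (Fin m) ℂ)
    (hA : A.IsHermitian) (hC : C.IsHermitian)
    (hint : ∀ z ∈ spectrum ℂ (A ⊗ₖ (1 : Matrix (Fin m) (Fin m) ℂ) +
        (1 : Matrix (Fin n) (Fin n) ℂ) ⊗ₖ C), ∃ j : ℤ, z = (j : ℂ)) :
    ∃ ν : ℝ, (∀ lam ∈ spectrum ℂ A, ∃ j : ℤ, lam + (ν : ℂ) = (j : ℂ)) ∧
      (∀ mu ∈ spectrum ℂ C, ∃ j : ℤ, mu - (ν : ℂ) = (j : ℂ)) :=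
  integer_spectrum_kronecker_sum_shift_general n m hn hm A C hC hint
end

section
/- Let U and W be unitary operators on a complex Hilbert space and ψ a unit vector such that Var_ψ(U) ≤ ε² and Var_ψ(W) ≤ ε² for some 0 ≤ ε ≤ 1. Then |⟨ψ, U*WUW*ψ⟩ − 1| ≤ 10ε. -/
/-!
Write `U ψ = α ψ + e` and `W* ψ = β ψ + f` with `α = ⟨ψ, Uψ⟩` and `β = ⟨ψ, W*ψ⟩`. Then
`‖e‖ ≤ ε`, and also `‖f‖ ≤ ε` because `Var_ψ(W*) = Var_ψ(W)` for a unitary `W`. Expanding,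
the commutator `(U W* - W* U) ψ` is a combination of `e` and `f` with coefficients of norm at
most `1`, so its norm is at most `4ε`. Finally `U* W U W* - 1 = U* W (U W* - W* U)` with `U* W`
unitary, hence `|⟨ψ, U* W U W* ψ⟩ - 1| ≤ ‖(U* W U W* - 1) ψ‖ ≤ 4ε`.
-/

theorem star_mul_mul_mul_star_sub_one {R : Type*} [Ring R] [StarMul R] {U W : R}
    (hU : U ∈ unitary R) (hW : W ∈ unitary R) :
    star U * W * U * star W - 1 = star U * W * (U * star W - star W * U) := by
  have hcancel : star U * W * (star W * U) = 1 := by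
    rw [← mul_assoc, mul_assoc (star U), Unitary.mul_star_self_of_mem hW, mul_one,
      Unitary.star_mul_self_of_mem hU]
  rw [mul_sub, hcancel, mul_assoc (star U * W) U]

theorem ContinuousLinearMap.norm_commutator_apply_le {𝕜 E : Type*} [NontriviallyNormedField 𝕜]
    [NormedAddCommGroup E] [NormedSpace 𝕜 E] (A B : E →L[𝕜] E) (a b : 𝕜) (x : E) :
    ‖(A * B) x - (B * A) x‖ ≤
      (‖A‖ + ‖a‖) * ‖B x - b • x‖ + (‖B‖ + ‖b‖) * ‖A x - a • x‖ := by
  have hsplit : (A * B) x - (B * A) x =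
      (A (B x - b • x) - a • (B x - b • x)) + (b • (A x - a • x) - B (A x - a • x)) := by
    simp only [mul_apply_eq_comp, map_sub, map_smul, smul_sub, smul_comm a b]
    abel
  rw [hsplit]
  refine (norm_add_le _ _).trans (add_le_add ?_ ?_)
  · refine (norm_sub_le _ _).trans ?_
    rw [add_mul, norm_smul]
    gcongr
    exact A.le_opNorm _
  · refine (norm_sub_le _ _).trans ?_
    rw [add_mul, norm_smul, add_comm]
    gcongr
    exact B.le_opNorm _

section Unitary

variable {𝕜 H : Type*} [RCLike 𝕜] [NormedAddCommGroup H] [InnerProductSpace 𝕜 H]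

theorem norm_inner_sub_one_le {ψ : H} (hψ : ‖ψ‖ = 1) (y : H) :
    ‖(inner 𝕜 ψ y : 𝕜) - 1‖ ≤ ‖y - ψ‖ := by
  have hψψ : (inner 𝕜 ψ ψ : 𝕜) = 1 := by
    rw [inner_self_eq_norm_sq_to_K, hψ, RCLike.ofReal_one, one_pow]
  calc ‖(inner 𝕜 ψ y : 𝕜) - 1‖ = ‖(inner 𝕜 ψ (y - ψ) : 𝕜)‖ := by rw [inner_sub_right, hψψ]
    _ ≤ ‖y - ψ‖ := (norm_inner_le_norm ψ _).trans_eq (by rw [hψ, one_mul])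

variable [CompleteSpace H]

theorem ContinuousLinearMap.opNorm_le_one_of_mem_unitary {V : H →L[𝕜] H}
    (hV : V ∈ unitary (H →L[𝕜] H)) : ‖V‖ ≤ 1 :=
  V.opNorm_le_bound zero_le_one fun x => by rw [V.norm_map_of_mem_unitary hV, one_mul]

theorem norm_inner_apply_le_one_of_mem_unitary_s13 {ψ : H} (hψ : ‖ψ‖ = 1) {V : H →L[𝕜] H}
    (hV : V ∈ unitary (H →L[𝕜] H)) : ‖(inner 𝕜 ψ (V ψ) : 𝕜)‖ ≤ 1 :=
  (norm_inner_le_norm ψ _).trans_eq (by rw [V.norm_map_of_mem_unitary hV, hψ, one_mul])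

theorem norm_star_mul_mul_mul_star_apply_sub_self {U W : H →L[𝕜] H}
    (hU : U ∈ unitary (H →L[𝕜] H)) (hW : W ∈ unitary (H →L[𝕜] H)) (x : H) :
    ‖(star U * W * U * star W) x - x‖ = ‖(U * star W) x - (star W * U) x‖ := by
  have hUW : star U * W ∈ unitary (H →L[𝕜] H) := Submonoid.mul_mem _ (Unitary.star_mem hU) hW
  calc ‖(star U * W * U * star W) x - x‖ = ‖(star U * W * U * star W - 1) x‖ := rfl
    _ = ‖(U * star W) x - (star W * U) x‖ := by
      rw [star_mul_mul_mul_star_sub_one hU hW, mul_apply_eq_comp,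
        ContinuousLinearMap.norm_map_of_mem_unitary hUW, sub_apply]

end Unitary

section Variance

variable {H : Type*} [NormedAddCommGroup H] [InnerProductSpace ℂ H]

theorem norm_apply_sub_inner_smul_le {ψ : H} {A : H →L[ℂ] H} {ε : ℝ} (hε : 0 ≤ ε)
    (hA : Var ψ A ≤ ε ^ 2) : ‖A ψ - (inner ℂ ψ (A ψ) : ℂ) • ψ‖ ≤ ε :=
  (sq_le_sq₀ (norm_nonneg _) hε).mp hA

variable [CompleteSpace H]

theorem var_star_of_mem_unitary {ψ : H} (hψ : ‖ψ‖ = 1) {V : H →L[ℂ] H}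
    (hV : V ∈ unitary (H →L[ℂ] H)) : Var ψ (star V) = Var ψ V := by
  have hconj : (inner ℂ ψ (star V ψ) : ℂ) = starRingEnd ℂ (inner ℂ ψ (V ψ)) := by
    rw [ContinuousLinearMap.star_eq_adjoint, ContinuousLinearMap.adjoint_inner_right,
      inner_conj_symm]
  rw [var_eq_norm_sq_sub_norm_inner_sq hψ, var_eq_norm_sq_sub_norm_inner_sq hψ, hconj,
    RCLike.norm_conj, ContinuousLinearMap.norm_map_of_mem_unitary (Unitary.star_mem hV),
    ContinuousLinearMap.norm_map_of_mem_unitary hV]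

theorem norm_commutator_apply_le_of_var_le {ψ : H} (hψ : ‖ψ‖ = 1) {A B : H →L[ℂ] H}
    (hA : A ∈ unitary (H →L[ℂ] H)) (hB : B ∈ unitary (H →L[ℂ] H)) {δ η : ℝ}
    (hδ : 0 ≤ δ) (hη : 0 ≤ η) (hVarA : Var ψ A ≤ δ ^ 2) (hVarB : Var ψ B ≤ η ^ 2) :
    ‖(A * B) ψ - (B * A) ψ‖ ≤ 2 * η + 2 * δ := by
  refine (A.norm_commutator_apply_le B (inner ℂ ψ (A ψ)) (inner ℂ ψ (B ψ)) ψ).trans ?_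
  have hA1 := ContinuousLinearMap.opNorm_le_one_of_mem_unitary hA
  have hB1 := ContinuousLinearMap.opNorm_le_one_of_mem_unitary hB
  have ha1 := norm_inner_apply_le_one_of_mem_unitary_s13 hψ hA
  have hb1 := norm_inner_apply_le_one_of_mem_unitary_s13 hψ hB
  gcongr
  · linarith
  · exact norm_apply_sub_inner_smul_le hη hVarB
  · linarith
  · exact norm_apply_sub_inner_smul_le hδ hVarA

end Variance

theorem expectation_of_commutator_unitary_general {H : Type*} [NormedAddCommGroup H]
    [InnerProductSpace ℂ H] [CompleteSpace H]
    (U W : H →L[ℂ] H) (hU : U ∈ unitary (H →L[ℂ] H)) (hW : W ∈ unitary (H →L[ℂ] H))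
    (ψ : H) (hψ : ‖ψ‖ = 1) (ε : ℝ) (hε0 : 0 ≤ ε)
    (hVarU : Var ψ U ≤ ε ^ 2) (hVarW : Var ψ W ≤ ε ^ 2) :
    ‖(inner ℂ ψ ((star U * W * U * star W) ψ) : ℂ) - 1‖ ≤ 10 * ε := by
  have hVarW' : Var ψ (star W) ≤ ε ^ 2 := by rwa [var_star_of_mem_unitary hψ hW]
  calc ‖(inner ℂ ψ ((star U * W * U * star W) ψ) : ℂ) - 1‖
      ≤ ‖(star U * W * U * star W) ψ - ψ‖ := norm_inner_sub_one_le hψ _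
    _ = ‖(U * star W) ψ - (star W * U) ψ‖ := norm_star_mul_mul_mul_star_apply_sub_self hU hW ψ
    _ ≤ 2 * ε + 2 * ε :=
        norm_commutator_apply_le_of_var_le hψ hU (Unitary.star_mem hW) hε0 hε0 hVarU hVarW'
    _ ≤ 10 * ε := by linarith

/-- If a unit vector `ψ` is an approximate eigenvector of the unitaries `U` and `W`
(variances at most `ε ^ 2`, `0 ≤ ε ≤ 1`), then the expectation of the commutator unitary
`U* W U W*` is within `10ε` of `1`. -/
theorem expectation_of_commutator_unitary {H : Type*} [NormedAddCommGroup H]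
    [InnerProductSpace ℂ H] [CompleteSpace H]
    (U W : H →L[ℂ] H) (hU : U ∈ unitary (H →L[ℂ] H)) (hW : W ∈ unitary (H →L[ℂ] H))
    (ψ : H) (hψ : ‖ψ‖ = 1) (ε : ℝ) (hε0 : 0 ≤ ε) (hε1 : ε ≤ 1)
    (hVarU : Var ψ U ≤ ε ^ 2) (hVarW : Var ψ W ≤ ε ^ 2) :
    ‖(inner ℂ ψ ((star U * W * U * star W) ψ) : ℂ) - 1‖ ≤ 10 * ε :=
  expectation_of_commutator_unitary_general U W hU hW ψ hψ ε hε0 hVarU hVarW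
end
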